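/- For the three-web on the domain {(x¹,x²,y¹,y²) ∈ ℝ⁴ : x¹y² ≠ 1 and x¹y² ≠ −1} given by f¹ = x¹ + y¹ + (1/2)(x¹)²y², f² = x² + y² − (1/2)x¹(y²)², with Δ := 1 + x¹y², the torsion covector is a₁ = y²/(Δ(2−Δ)) and a₂ = x¹/(Δ(2−Δ)); in particular the web is not isoclinicly geodesic off the set x¹ = y² = 0. -/

import Mathlib

/-! All partial derivatives of `webA` are polynomial: `f̄` is lower and `f̃` upper triangular,
and the only nonvanishing mixed derivatives are `∂²fⁱ/∂x¹∂y² = (x¹, −y²)ⁱ`. Hence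
`Γⁱⱼₖ = −(x¹, −y²)ⁱ ḡ¹ⱼ g̃²ₖ`, and as `ḡ¹ = (1/Δ, 0)` and `g̃² = (0, 1/(2 − Δ))` only `Γⁱ₁₂`
survives; then `a₁ = Γ²₁₂` and `a₂ = −Γ¹₁₂`. -/

noncomputable section

open Matrix

/-- Partial derivative of `g` with respect to the `j`-th coordinate at the point `x`. -/
def pd (j : Fin 2) (g : (Fin 2 → ℝ) → ℝ) (x : Fin 2 → ℝ) : ℝ :=
  deriv (fun t => g (Function.update x j t)) (x j)

variable (f : Fin 2 → (Fin 2 → ℝ) → (Fin 2 → ℝ) → ℝ)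

/-- Jacobian matrix `f̄ = (∂fⁱ/∂xʲ)` with respect to the first group of variables. -/
def fbar (x y : Fin 2 → ℝ) : Matrix (Fin 2) (Fin 2) ℝ :=
  Matrix.of fun i j => pd j (fun x' => f i x' y) x

/-- Jacobian matrix `f̃ = (∂fⁱ/∂yʲ)` with respect to the second group of variables. -/
def ftil (x y : Fin 2 → ℝ) : Matrix (Fin 2) (Fin 2) ℝ :=
  Matrix.of fun i j => pd j (fun y' => f i x y') y

/-- Mixed second partial derivative `∂²fⁱ/∂xˡ∂yᵐ`. -/
def d2 (i l m : Fin 2) (x y : Fin 2 → ℝ) : ℝ :=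
  pd m (fun y' => pd l (fun x' => f i x' y') x) y

/-- Connection coefficients
`Γⁱⱼₖ = −∑_{l,m} (∂²fⁱ/∂xˡ∂yᵐ) ḡˡⱼ g̃ᵐₖ`, where `ḡ = f̄⁻¹`, `g̃ = f̃⁻¹`. -/
def Gam (i j k : Fin 2) (x y : Fin 2 → ℝ) : ℝ :=
  - ∑ l : Fin 2, ∑ m : Fin 2,
      d2 f i l m x y * (fbar f x y)⁻¹ l j * (ftil f x y)⁻¹ m k

/-- Torsion covector `aⱼ = ∑ₖ (Γᵏⱼₖ − Γᵏₖⱼ)`. -/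
def aCov (j : Fin 2) (x y : Fin 2 → ℝ) : ℝ :=
  ∑ k : Fin 2, (Gam f k j k x y - Gam f k k j x y)

/-- Covariant derivative `p_{ik} = ∑ₘ (∂aᵢ/∂xᵐ) ḡᵐₖ − ∑ⱼ aⱼ Γʲₖᵢ`. -/
def pCov (i k : Fin 2) (x y : Fin 2 → ℝ) : ℝ :=
  (∑ m : Fin 2, pd m (fun x' => aCov f i x' y) x * (fbar f x y)⁻¹ m k)
    - ∑ j : Fin 2, aCov f j x y * Gam f j k i x y

/-- Covariant derivative `q_{ik} = ∑ₘ (∂aᵢ/∂yᵐ) g̃ᵐₖ − ∑ⱼ aⱼ Γʲᵢₖ`. -/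
def qCov (i k : Fin 2) (x y : Fin 2 → ℝ) : ℝ :=
  (∑ m : Fin 2, pd m (fun y' => aCov f i x y') y * (ftil f x y)⁻¹ m k)
    - ∑ j : Fin 2, aCov f j x y * Gam f j i k x y

/-- Isoclinicity invariant `p = (p₁₂ − p₂₁)/2`. -/
def pIso (x y : Fin 2 → ℝ) : ℝ := (pCov f 0 1 x y - pCov f 1 0 x y) / 2

/-- Isoclinicity invariant `q = (q₁₂ − q₂₁)/2`. -/
def qIso (x y : Fin 2 → ℝ) : ℝ := (qCov f 0 1 x y - qCov f 1 0 x y) / 2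


/-- The web `f¹ = x¹ + y¹ + (1/2)(x¹)²y²`, `f² = x² + y² − (1/2)x¹(y²)²`.
(Indices: `x 0 ↦ x¹`, `x 1 ↦ x²`, `y 0 ↦ y¹`, `y 1 ↦ y²`.) -/
noncomputable def webA : Fin 2 → (Fin 2 → ℝ) → (Fin 2 → ℝ) → ℝ :=
  ![fun x y => x 0 + y 0 + (1/2) * (x 0)^2 * y 1,
    fun x y => x 1 + y 1 - (1/2) * x 0 * (y 1)^2]

lemma Matrix.inv_fin_two_of {K : Type*} [Field K] (a b c d : K) :
    !![a, b; c, d]⁻¹ = (a * d - b * c)⁻¹ • !![d, -b; -c, a] := by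
  rw [Matrix.inv_def, Matrix.det_fin_two_of, Matrix.adjugate_fin_two_of, Ring.inverse_eq_inv']

lemma pd_zero_eq_deriv (g : (Fin 2 → ℝ) → ℝ) (x : Fin 2 → ℝ) :
    pd 0 g x = deriv (fun t => g ![t, x 1]) (x 0) := by
  have h : ∀ t, Function.update x 0 t = ![t, x 1] := fun t => by
    ext i; fin_cases i <;> simp
  simp only [pd, h]

lemma pd_one_eq_deriv (g : (Fin 2 → ℝ) → ℝ) (x : Fin 2 → ℝ) :
    pd 1 g x = deriv (fun t => g ![x 0, t]) (x 1) := by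
  have h : ∀ t, Function.update x 1 t = ![x 0, t] := fun t => by
    ext i; fin_cases i <;> simp
  simp only [pd, h]

section WebA

variable (x y : Fin 2 → ℝ)

lemma fbar_webA : fbar webA x y = !![1 + x 0 * y 1, 0; -(1/2) * y 1 ^ 2, 1] := by
  ext i j
  fin_cases i <;> fin_cases j <;>
    simp (disch := fun_prop) [fbar, pd_zero_eq_deriv, pd_one_eq_deriv, webA, -mul_eq_mul_right_iff]
  ring

lemma ftil_webA : ftil webA x y = !![1, 1/2 * x 0 ^ 2; 0, 1 - x 0 * y 1] := by
  ext i j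
  fin_cases i <;> fin_cases j <;>
    simp (disch := fun_prop) [ftil, pd_zero_eq_deriv, pd_one_eq_deriv, webA]
  ring

lemma d2_webA (i l m : Fin 2) :
    d2 webA i l m x y = if l = 0 ∧ m = 1 then ![x 0, -y 1] i else 0 := by
  fin_cases i <;> fin_cases l <;> fin_cases m <;>
    simp (disch := fun_prop) [d2, pd_zero_eq_deriv, pd_one_eq_deriv, webA]
  all_goals ring

lemma Gam_webA (i j k : Fin 2) :
    Gam webA i j k x y = -(![x 0, -y 1] i * (fbar webA x y)⁻¹ 0 j * (ftil webA x y)⁻¹ 1 k) := by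
  simp [Gam, Fin.sum_univ_two, d2_webA]

lemma aCov_webA (j : Fin 2) (hΔ : 1 + x 0 * y 1 ≠ 0) (hΔ' : 1 - x 0 * y 1 ≠ 0) :
    aCov webA j x y = ![y 1, x 0] j / ((1 + x 0 * y 1) * (1 - x 0 * y 1)) := by
  have hfbar : (fbar webA x y)⁻¹ 0 = ![(1 + x 0 * y 1)⁻¹, 0] := by
    rw [fbar_webA, Matrix.inv_fin_two_of]
    ext j; fin_cases j <;> simp
  have hftil : (ftil webA x y)⁻¹ 1 = ![0, (1 - x 0 * y 1)⁻¹] := by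
    rw [ftil_webA, Matrix.inv_fin_two_of]
    ext k; fin_cases k <;> simp
  fin_cases j <;> simp [aCov, Fin.sum_univ_two, Gam_webA, hfbar, hftil] <;> field_simp

end WebA

/-- For the web `webA` on the domain `x¹y² ≠ ±1`, with `Δ = 1 + x¹y²`, the
torsion covector is `a₁ = y²/(Δ(2−Δ))`, `a₂ = x¹/(Δ(2−Δ))`; in particular
the web is not isoclinicly geodesic off the set `x¹ = y² = 0`. -/
theorem webA_torsion_covector (x y : Fin 2 → ℝ)
    (h1 : x 0 * y 1 ≠ 1) (h2 : x 0 * y 1 ≠ -1)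
    (Δ : ℝ) (hΔ : Δ = 1 + x 0 * y 1) :
    aCov webA 0 x y = y 1 / (Δ * (2 - Δ)) ∧
    aCov webA 1 x y = x 0 / (Δ * (2 - Δ)) ∧
    (¬ (x 0 = 0 ∧ y 1 = 0) → ¬ (aCov webA 0 x y = 0 ∧ aCov webA 1 x y = 0)) := by
  have hplus : 1 + x 0 * y 1 ≠ 0 := fun h => h2 (by linarith)
  have hminus : 1 - x 0 * y 1 ≠ 0 := fun h => h1 (by linarith)
  have hden : Δ * (2 - Δ) = (1 + x 0 * y 1) * (1 - x 0 * y 1) := by rw [hΔ]; ring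
  have ha (j : Fin 2) := aCov_webA x y j hplus hminus
  simp only [hden, ha, Matrix.cons_val_zero, Matrix.cons_val_one, true_and,
    div_eq_zero_iff, mul_ne_zero hplus hminus, or_false]
  tauto

end
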